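/- Let Q be the set of squarefree odd integers greater than 1 (the finite products of distinct odd primes), with sgn q = (−1)^n when q is a product of n distinct odd primes, and fix a bijective enumeration q_1, q_2, q_3, ... of Q. For positive integers k, i let δ(k,i) = 1 if q_i divides k and 0 otherwise, and let f(k,h) = Σ_{i=1}^h sgn(q_i)·δ(k,i). Let x, y be real numbers with 1/2 < x < 1 and y > 0, suppose ζ(x+iy) = 0, and set a_k = (−1)^{k−1} k^{−x} cos(y·log k) and b_k = (−1)^{k−1} k^{−x} sin(y·log k) (with (−1)^0 = 1). Then for every positive integer h, the series Σ_{k=1}^∞ f(k,h)·a_k converges to 0 and the series Σ_{k=1}^∞ f(k,h)·b_k converges to 0. -/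

import Mathlib

/-!
Write `η(s) = ∑ (-1)^(k-1) k^(-s)`. Pairing consecutive terms, each pair is `O(k^(-re s - 1))` by
the mean value theorem, so the partial sums converge for `0 < re s`; for `re s > 1` splitting off
the even terms gives `η(s) = (1 - 2^(1-s)) ζ(s)`, and by analytic continuation this persists on
`0 < re s`, `s ≠ 1`. Hence at a zero `s = x + iy` of `ζ` the partial sums of `η(s)` tend to `0`.
For odd `q` we have `(-1)^(qm-1) = (-1)^(m-1)`, so the terms indexed by multiples of `q` form
`q^(-s)` times the whole series, and their partial sums tend to `0` as well. Finally `f(k,h)` is a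
finite combination of the indicators of `q_i ∣ k`, and `a_k`, `-b_k` are the real and imaginary
parts of `(-1)^(k-1) k^(-s)`.
-/

open Filter Finset Complex Topology

noncomputable def etaTerm (s : ℂ) (k : ℕ) : ℂ := (-1) ^ (k - 1) * (k : ℂ) ^ (-s)

noncomputable def etaPair (s : ℂ) (j : ℕ) : ℂ :=
  ((2 * j + 1 : ℕ) : ℂ) ^ (-s) - ((2 * j + 2 : ℕ) : ℂ) ^ (-s)

-- Grouping the terms of `∑ (-1)^(k-1) k^(-s)` in pairs makes the series absolutely convergent
-- for `0 < re s` (`norm_etaPair_le`).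
noncomputable def dirichletEta (s : ℂ) : ℂ := ∑' j, etaPair s j

lemma norm_cpow_neg_sub_cpow_neg_le {s : ℂ} (hs : -1 ≤ s.re) {a : ℝ} (ha : 0 < a) :
    ‖(a : ℂ) ^ (-s) - ((a + 1 : ℝ) : ℂ) ^ (-s)‖ ≤ ‖s‖ * a ^ (-s.re - 1) := by
  have hderiv : ∀ t ∈ Set.Icc a (a + 1),
      HasDerivWithinAt (fun t : ℝ ↦ (t : ℂ) ^ (-s)) (-s * (t : ℂ) ^ (-s - 1))
        (Set.Icc a (a + 1)) t :=
    fun t ht ↦ ((hasStrictDerivAt_cpow_const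
      (ofReal_mem_slitPlane.2 (ha.trans_le ht.1))).hasDerivAt.comp_ofReal).hasDerivWithinAt
  have hbound : ∀ t ∈ Set.Icc a (a + 1),
      ‖-s * (t : ℂ) ^ (-s - 1)‖ ≤ ‖s‖ * a ^ (-s.re - 1) := by
    intro t ht
    rw [norm_mul, norm_neg, norm_cpow_eq_rpow_re_of_pos (ha.trans_le ht.1)]
    gcongr
    exact Real.rpow_le_rpow_of_nonpos ha ht.1 (by rw [sub_re, neg_re, one_re]; linarith)
  have := (convex_Icc a (a + 1)).norm_image_sub_le_of_norm_hasDerivWithin_le hderiv hbound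
    (Set.left_mem_Icc.2 (by linarith)) (Set.right_mem_Icc.2 (by linarith))
  rw [norm_sub_rev]
  simpa using this

lemma norm_etaPair_le {s : ℂ} (hs : -1 ≤ s.re) (j : ℕ) :
    ‖etaPair s j‖ ≤ ‖s‖ * (2 * j + 1 : ℝ) ^ (-s.re - 1) := by
  have := norm_cpow_neg_sub_cpow_neg_le hs (a := 2 * j + 1) (by positivity)
  rw [etaPair]
  convert this using 4 <;> push_cast <;> ring_nf

lemma summable_two_mul_add_one_rpow {c : ℝ} (hc : c < -1) :
    Summable (fun j : ℕ ↦ (2 * j + 1 : ℝ) ^ c) := by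
  refine ((summable_nat_add_iff 1).2 (Real.summable_nat_rpow.2 hc)).of_nonneg_of_le
    (fun j ↦ by positivity) fun j ↦ Real.rpow_le_rpow_of_nonpos (by positivity) ?_ (by linarith)
  push_cast
  linarith

lemma summable_etaPair {s : ℂ} (hs : 0 < s.re) : Summable (etaPair s) :=
  .of_norm_bounded ((summable_two_mul_add_one_rpow (c := -s.re - 1) (by linarith)).mul_left ‖s‖)
    (norm_etaPair_le (by linarith))

lemma sum_range_etaPair (s : ℂ) (m : ℕ) :
    ∑ j ∈ range m, etaPair s j = ∑ k ∈ Icc 1 (2 * m), etaTerm s k := by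
  induction m with
  | zero => simp
  | succ m ih =>
    rw [sum_range_succ, ih, show 2 * (m + 1) = 2 * m + 1 + 1 by ring,
      sum_Icc_succ_top (by omega), sum_Icc_succ_top (by omega), etaTerm, etaTerm,
      show 2 * m + 1 + 1 - 1 = 2 * m + 1 by omega, Nat.add_sub_cancel, pow_succ, pow_mul,
      neg_one_sq, one_pow, etaPair]
    push_cast
    ring_nf

lemma tendsto_etaTerm_zero {s : ℂ} (hs : 0 < s.re) : Tendsto (etaTerm s) atTop (𝓝 0) := by
  refine squeeze_zero_norm' ?_ ((tendsto_rpow_neg_atTop hs).comp tendsto_natCast_atTop_atTop)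
  filter_upwards [eventually_gt_atTop 0] with k hk
  simp [etaTerm, norm_natCast_cpow_of_pos hk]

lemma sum_Icc_etaTerm_sub_sum_Icc_two_mul_div_two (s : ℂ) (n : ℕ) :
    ∑ k ∈ Icc 1 n, etaTerm s k - ∑ k ∈ Icc 1 (2 * (n / 2)), etaTerm s k =
      if Even n then 0 else etaTerm s n := by
  obtain ⟨m, rfl | rfl⟩ := Nat.even_or_odd' n
  · simp
  · rw [show (2 * m + 1) / 2 = m by omega, sum_Icc_succ_top (by omega)]
    simp

lemma tendsto_sum_etaTerm {s : ℂ} (hs : 0 < s.re) :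
    Tendsto (fun n ↦ ∑ k ∈ Icc 1 n, etaTerm s k) atTop (𝓝 (dirichletEta s)) := by
  have hpairs : Tendsto (fun n ↦ ∑ k ∈ Icc 1 (2 * (n / 2)), etaTerm s k) atTop
      (𝓝 (dirichletEta s)) := by
    simp_rw [← sum_range_etaPair]
    exact (summable_etaPair hs).hasSum.tendsto_sum_nat.comp
      (Nat.tendsto_div_const_atTop two_ne_zero)
  have hodd : Tendsto (fun n ↦ if Even n then 0 else etaTerm s n) atTop (𝓝 0) :=
    squeeze_zero_norm (a := fun n ↦ ‖etaTerm s n‖) (fun n ↦ by split_ifs <;> simp)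
      (by simpa using (tendsto_etaTerm_zero hs).norm)
  refine (add_zero (dirichletEta s) ▸ hpairs.add hodd).congr fun n ↦ ?_
  rw [← sum_Icc_etaTerm_sub_sum_Icc_two_mul_div_two, add_sub_cancel]

lemma dirichletEta_eq_of_one_lt_re {s : ℂ} (hs : 1 < s.re) :
    dirichletEta s = (1 - 2 ^ (1 - s)) * riemannZeta s := by
  set g : ℕ → ℂ := fun n ↦ (n : ℂ) ^ (-s)
  have hs0 : s ≠ 0 := ne_zero_of_re_pos (one_pos.trans hs)
  have hζ : HasSum g (riemannZeta s) := by
    simpa [g, zeta_eq_tsum_one_div_nat_cpow hs, cpow_neg] using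
      (summable_one_div_nat_cpow.2 hs).hasSum
  have heven : HasSum (fun j ↦ g (2 * j)) (2 ^ (-s) * riemannZeta s) := by
    refine (hζ.mul_left (2 ^ (-s))).congr_fun fun j ↦ ?_
    simpa [g] using natCast_mul_natCast_cpow 2 j (-s)
  have heven' : HasSum (fun j ↦ g (2 * j + 2)) (2 ^ (-s) * riemannZeta s) := by
    rw [← hasSum_nat_add_iff' 1] at heven
    simpa [g, mul_add, zero_cpow (neg_ne_zero.2 hs0)] using heven
  obtain ⟨b, hodd⟩ :=
    hζ.summable.comp_injective (i := (2 * · + 1)) fun _ _ h ↦ by simpa using h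
  have hb : b = (1 - 2 ^ (-s)) * riemannZeta s := by
    linear_combination (heven.even_add_odd hodd).unique hζ
  have hpairs : HasSum (etaPair s) (b - 2 ^ (-s) * riemannZeta s) := hodd.sub heven'
  rw [dirichletEta, hpairs.tsum_eq, hb, sub_eq_add_neg (1 : ℂ) s, cpow_add _ _ two_ne_zero,
    cpow_one]
  ring

lemma differentiableOn_dirichletEta : DifferentiableOn ℂ dirichletEta {s | 0 < s.re} := by
  intro s (hs : 0 < s.re)
  set V := {z : ℂ | s.re / 2 < z.re} ∩ Metric.ball 0 (‖s‖ + 1)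
  have hV : IsOpen V := (isOpen_lt continuous_const continuous_re).inter Metric.isOpen_ball
  have hsV : s ∈ V := ⟨show s.re / 2 < s.re by linarith, by simp⟩
  have hdiff : DifferentiableOn ℂ dirichletEta V := by
    refine differentiableOn_tsum_of_summable_norm
      ((summable_two_mul_add_one_rpow (c := -(s.re / 2) - 1) (by linarith)).mul_left (‖s‖ + 1))
      (fun j ↦ ?_) hV fun j z ⟨(hzre : s.re / 2 < z.re), hzR⟩ ↦ ?_
    · exact ((differentiable_neg.const_cpow (Or.inl (Nat.cast_ne_zero.2 (by omega)))).sub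
        (differentiable_neg.const_cpow (Or.inl (Nat.cast_ne_zero.2 (by omega))))).differentiableOn
    · calc ‖etaPair z j‖ ≤ ‖z‖ * (2 * j + 1 : ℝ) ^ (-z.re - 1) :=
            norm_etaPair_le (by linarith) j
        _ ≤ (‖s‖ + 1) * (2 * j + 1 : ℝ) ^ (-(s.re / 2) - 1) := by
            gcongr
            · exact (mem_ball_zero_iff.1 hzR).le
            · linarith
  exact (hdiff.differentiableAt (hV.mem_nhds hsV)).differentiableWithinAt

lemma isPreconnected_re_pos_diff_ray :
    IsPreconnected {z : ℂ | 0 < z.re ∧ (z.im ≠ 0 ∨ z.re < 1)} := by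
  have hsplit : {z : ℂ | 0 < z.re ∧ (z.im ≠ 0 ∨ z.re < 1)} =
      ({z | 0 < z.re} ∩ {z | 0 < z.im} ∪ {z | 0 < z.re} ∩ {z | z.re < 1}) ∪
        {z | 0 < z.re} ∩ {z | z.im < 0} := by
    ext z
    simp only [Set.mem_ofPred_eq, Set.mem_union, Set.mem_inter_iff, ne_iff_lt_or_gt]
    tauto
  have hre := convex_halfSpace_re_gt (0 : ℝ)
  rw [hsplit]
  refine (IsPreconnected.union (1 / 2 + I) ?_ ?_
    (hre.inter (convex_halfSpace_im_gt 0)).isPreconnected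
    (hre.inter (convex_halfSpace_re_lt 1)).isPreconnected).union (1 / 2 - I) ?_ ?_
    (hre.inter (convex_halfSpace_im_lt 0)).isPreconnected <;> norm_num

lemma dirichletEta_eq {s : ℂ} (hs : 0 < s.re) (hs1 : s ≠ 1) :
    dirichletEta s = (1 - 2 ^ (1 - s)) * riemannZeta s := by
  rcases lt_or_ge 1 s.re with h1 | h1
  · exact dirichletEta_eq_of_one_lt_re h1
  -- the half-plane slit along `[1, ∞)`: connected, free of the pole of `ζ`, and meeting `1 < re`
  set U := {z : ℂ | 0 < z.re ∧ (z.im ≠ 0 ∨ z.re < 1)}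
  have hUopen : IsOpen U := (isOpen_lt continuous_const continuous_re).inter
    ((isOpen_ne_fun continuous_im continuous_const).union
      (isOpen_lt continuous_re continuous_const))
  have hUre : U ⊆ {z | 0 < z.re} := fun z hz ↦ hz.1
  have hU1 : (1 : ℂ) ∉ U := by simp [U]
  have hsU : s ∈ U := by
    refine ⟨hs, ?_⟩
    by_contra! h
    exact hs1 (Complex.ext (by rw [one_re]; linarith [h.2]) (by simpa using h.1))
  have hη : AnalyticOnNhd ℂ dirichletEta U :=
    (differentiableOn_dirichletEta.mono hUre).analyticOnNhd hUopen
  have hζ : AnalyticOnNhd ℂ (fun z ↦ (1 - 2 ^ (1 - z)) * riemannZeta z) U := by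
    refine DifferentiableOn.analyticOnNhd (fun z hz ↦ ?_) hUopen
    have hz1 : z ≠ 1 := by rintro rfl; exact hU1 hz
    exact (((differentiableAt_const _).sub ((differentiableAt_const _).sub differentiableAt_id
      |>.const_cpow (Or.inl two_ne_zero))).mul
        (differentiableAt_riemannZeta hz1)).differentiableWithinAt
  refine hη.eqOn_of_preconnected_of_eventuallyEq hζ isPreconnected_re_pos_diff_ray
    (z₀ := 2 + I) (by norm_num [U]) ?_ hsU
  filter_upwards [(isOpen_lt continuous_const continuous_re).mem_nhds
    (show (1 : ℝ) < (2 + I).re by norm_num)] with z hz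
  exact dirichletEta_eq_of_one_lt_re hz

lemma tendsto_sum_etaTerm_of_riemannZeta_eq_zero {s : ℂ} (hs : 0 < s.re) (hs1 : s ≠ 1)
    (hζ : riemannZeta s = 0) :
    Tendsto (fun n ↦ ∑ k ∈ Icc 1 n, etaTerm s k) atTop (𝓝 0) := by
  simpa [dirichletEta_eq hs hs1, hζ] using tendsto_sum_etaTerm hs

lemma etaTerm_mul_of_odd {q : ℕ} (hq : Odd q) (s : ℂ) (m : ℕ) :
    etaTerm s (q * m) = (q : ℂ) ^ (-s) * etaTerm s m := by
  have hsign : (-1 : ℂ) ^ (q * m - 1) = (-1) ^ (m - 1) := by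
    rcases Nat.eq_zero_or_pos m with rfl | hm
    · simp
    rw [← mul_left_inj' (neg_ne_zero.2 one_ne_zero), ← pow_succ, ← pow_succ,
      Nat.sub_add_cancel (mul_pos hq.pos hm), Nat.sub_add_cancel hm, pow_mul, hq.neg_one_pow]
  rw [etaTerm, etaTerm, hsign, Nat.cast_mul, natCast_mul_natCast_cpow]
  ring

lemma sum_Icc_filter_dvd {M : Type*} [AddCommMonoid M] (g : ℕ → M) {q : ℕ} (hq : 0 < q)
    (n : ℕ) :
    ∑ k ∈ Icc 1 n with q ∣ k, g k = ∑ m ∈ Icc 1 (n / q), g (q * m) := by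
  rw [← sum_image fun a _ b _ h ↦ Nat.eq_of_mul_eq_mul_left hq h]
  congr 1
  ext k
  simp only [mem_filter, mem_Icc, mem_image, Nat.le_div_iff_mul_le hq]
  constructor
  · rintro ⟨⟨hk1, hkn⟩, m, rfl⟩
    exact ⟨m, ⟨Nat.pos_of_mul_pos_left hk1, by linarith⟩, rfl⟩
  · rintro ⟨m, ⟨hm1, hmn⟩, rfl⟩
    exact ⟨⟨Nat.mul_pos hq hm1, by linarith⟩, dvd_mul_right q m⟩

lemma tendsto_sum_filter_dvd_etaTerm {s L : ℂ} {q : ℕ} (hq : Odd q)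
    (hL : Tendsto (fun n ↦ ∑ k ∈ Icc 1 n, etaTerm s k) atTop (𝓝 L)) :
    Tendsto (fun n ↦ ∑ k ∈ Icc 1 n with q ∣ k, etaTerm s k) atTop
      (𝓝 ((q : ℂ) ^ (-s) * L)) := by
  simp_rw [sum_Icc_filter_dvd _ hq.pos, etaTerm_mul_of_odd hq, ← mul_sum]
  exact (hL.comp (Nat.tendsto_div_const_atTop hq.pos.ne')).const_mul _

lemma etaTerm_ofReal_add_mul_I (x y : ℝ) {k : ℕ} (hk : 0 < k) :
    etaTerm (x + y * I) k =
      ⟨(-1) ^ (k - 1) * (k : ℝ) ^ (-x) * Real.cos (y * Real.log k),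
        -((-1) ^ (k - 1) * (k : ℝ) ^ (-x) * Real.sin (y * Real.log k))⟩ := by
  have hk' : (0 : ℝ) < k := by exact_mod_cast hk
  have hsign : (-1 : ℂ) ^ (k - 1) = (((-1 : ℝ) ^ (k - 1) : ℝ) : ℂ) := by push_cast; rfl
  rw [etaTerm, hsign, cpow_def_of_ne_zero (by exact_mod_cast hk.ne'), ← natCast_log]
  apply Complex.ext
  · rw [re_ofReal_mul, exp_re]
    simp [Real.rpow_def_of_pos hk', -natCast_log, mul_comm, mul_left_comm]
  · rw [im_ofReal_mul, exp_im]
    simp [Real.rpow_def_of_pos hk', -natCast_log, mul_comm, mul_assoc]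

lemma tendsto_sum_weighted_dvd_etaTerm {ι : Type*} (J : Finset ι) (w : ι → ℂ) {q : ι → ℕ}
    (hq : ∀ i ∈ J, Odd (q i)) {s : ℂ}
    (hη : Tendsto (fun n ↦ ∑ k ∈ Icc 1 n, etaTerm s k) atTop (𝓝 0)) :
    Tendsto
      (fun n ↦ ∑ k ∈ Icc 1 n, (∑ i ∈ J, w i * if q i ∣ k then 1 else 0) * etaTerm s k)
      atTop (𝓝 0) := by
  have hswap (n : ℕ) :
      ∑ k ∈ Icc 1 n, (∑ i ∈ J, w i * if q i ∣ k then 1 else 0) * etaTerm s k =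
        ∑ i ∈ J, w i * ∑ k ∈ Icc 1 n with q i ∣ k, etaTerm s k := by
    simp_rw [sum_mul, sum_filter, mul_sum]
    rw [sum_comm]
    simp
  simp_rw [hswap]
  simpa using tendsto_finsetSum J fun i hi ↦
    (tendsto_sum_filter_dvd_etaTerm (hq i hi) hη).const_mul (w i)

theorem stmt_7_general
    (e : ℕ → ℕ)
    (he_range : Set.range e = {q : ℕ | Squarefree q ∧ Odd q ∧ 1 < q})
    (sgn : ℕ → ℝ)
    (δ : ℕ → ℕ → ℝ) (hδ : ∀ k i : ℕ, δ k i = if e i ∣ k then 1 else 0)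
    (f : ℕ → ℕ → ℝ) (hf : ∀ k h : ℕ, f k h = ∑ i ∈ Finset.range h, sgn (e i) * δ k i)
    (x y : ℝ) (hx : 1 / 2 < x) (hy : 0 < y)
    (hz : riemannZeta ((x : ℂ) + (y : ℂ) * Complex.I) = 0)
    (a b : ℕ → ℝ)
    (ha : ∀ k : ℕ, 0 < k → a k = (-1 : ℝ) ^ (k - 1) * (k : ℝ) ^ (-x) * Real.cos (y * Real.log k))
    (hb : ∀ k : ℕ, 0 < k → b k = (-1 : ℝ) ^ (k - 1) * (k : ℝ) ^ (-x) * Real.sin (y * Real.log k))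
    (h : ℕ) :
    Tendsto (fun n : ℕ => ∑ k ∈ Finset.Icc 1 n, f k h * a k) atTop (nhds 0) ∧
    Tendsto (fun n : ℕ => ∑ k ∈ Finset.Icc 1 n, f k h * b k) atTop (nhds 0) := by
  set s : ℂ := x + y * I
  have hodd (i : ℕ) : Odd (e i) := (he_range ▸ Set.mem_range_self i).2.1
  have hη := tendsto_sum_etaTerm_of_riemannZeta_eq_zero (s := s)
    (by simpa [s] using hx.trans' one_half_pos)
    (fun h1 ↦ by simpa [s, hy.ne'] using congr_arg im h1) hz
  have hF := tendsto_sum_weighted_dvd_etaTerm (range h) (fun i ↦ (sgn (e i) : ℂ))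
    (fun i _ ↦ hodd i) hη
  have hweight (k : ℕ) : ∑ i ∈ range h, (sgn (e i) : ℂ) * (if e i ∣ k then 1 else 0) =
      ((f k h : ℝ) : ℂ) := by
    simp only [hf, hδ, ofReal_sum, ofReal_mul, apply_ite ((↑) : ℝ → ℂ), ofReal_one,
      ofReal_zero]
  simp_rw [hweight] at hF
  have hre (n : ℕ) : (∑ k ∈ Icc 1 n, ((f k h : ℝ) : ℂ) * etaTerm s k).re =
      ∑ k ∈ Icc 1 n, f k h * a k := by
    rw [re_sum]
    refine sum_congr rfl fun k hk ↦ ?_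
    rw [re_ofReal_mul, etaTerm_ofReal_add_mul_I x y (mem_Icc.1 hk).1, ha k (mem_Icc.1 hk).1]
  have him (n : ℕ) : -(∑ k ∈ Icc 1 n, ((f k h : ℝ) : ℂ) * etaTerm s k).im =
      ∑ k ∈ Icc 1 n, f k h * b k := by
    rw [im_sum, ← sum_neg_distrib]
    refine sum_congr rfl fun k hk ↦ ?_
    rw [im_ofReal_mul, etaTerm_ofReal_add_mul_I x y (mem_Icc.1 hk).1, hb k (mem_Icc.1 hk).1,
      mul_neg, neg_neg]
  exact ⟨((continuous_re.tendsto 0).comp hF).congr hre,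
    (neg_zero (G := ℝ) ▸ ((continuous_im.tendsto 0).comp hF).neg).congr him⟩

theorem stmt_7
    (e : ℕ → ℕ)
    (he_inj : Function.Injective e)
    (he_range : Set.range e = {q : ℕ | Squarefree q ∧ Odd q ∧ 1 < q})
    (sgn : ℕ → ℝ) (hsgn : ∀ q : ℕ, sgn q = (-1 : ℝ) ^ q.primeFactors.card)
    (δ : ℕ → ℕ → ℝ) (hδ : ∀ k i : ℕ, δ k i = if e i ∣ k then 1 else 0)
    (f : ℕ → ℕ → ℝ) (hf : ∀ k h : ℕ, f k h = ∑ i ∈ Finset.range h, sgn (e i) * δ k i)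
    (x y : ℝ) (hx : 1 / 2 < x) (hx1 : x < 1) (hy : 0 < y)
    (hz : riemannZeta ((x : ℂ) + (y : ℂ) * Complex.I) = 0)
    (a b : ℕ → ℝ)
    (ha : ∀ k : ℕ, 0 < k → a k = (-1 : ℝ) ^ (k - 1) * (k : ℝ) ^ (-x) * Real.cos (y * Real.log k))
    (hb : ∀ k : ℕ, 0 < k → b k = (-1 : ℝ) ^ (k - 1) * (k : ℝ) ^ (-x) * Real.sin (y * Real.log k))
    (h : ℕ) (hh : 0 < h) :
    Tendsto (fun n : ℕ => ∑ k ∈ Finset.Icc 1 n, f k h * a k) atTop (nhds 0) ∧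
    Tendsto (fun n : ℕ => ∑ k ∈ Finset.Icc 1 n, f k h * b k) atTop (nhds 0) :=
  stmt_7_general e he_range sgn δ hδ f hf x y hx hy hz a b ha hb h
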